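/- Let A be a finitely generated abelian group, let B be a finitely generated free abelian group, and let f : A → B be a group homomorphism such that the precomposition map f* : Hom(B, ℤ) → Hom(A, ℤ), φ ↦ φ ∘ f, is bijective. Then f is surjective and the kernel of f is exactly the torsion subgroup of A (i.e., for a ∈ A, f(a) = 0 if and only if a has finite order). -/

import Mathlib

/-!
Every linear form on `A` kills torsion, so `Hom(A, ℤ) = Hom(A/T, ℤ)` with `T` the torsion
subgroup, and `f` factors through a map `f̄ : A/T → B` with bijective dual. Since `A/T` and `B`
are finitely generated free, hence reflexive, `f̄` is the double dual of its dual up to the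
evaluation isomorphisms, so `f̄` is bijective: `f = f̄ ∘ (A → A/T)` is surjective with kernel `T`.
-/

open Module Submodule

namespace LinearMap

variable {R M N : Type*} [CommRing R] [AddCommGroup M] [Module R M] [AddCommGroup N] [Module R N]

theorem bijective_of_dualMap_bijective [IsReflexive R M] [IsReflexive R N] {f : M →ₗ[R] N}
    (hf : Function.Bijective f.dualMap) : Function.Bijective f := by
  have hff : Function.Bijective f.dualMap.dualMap :=
    (LinearEquiv.ofBijective _ hf).dualMap.bijective
  rw [← Dual.eval_comp_comp_evalEquiv_eq, coe_comp, coe_comp,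
    Function.Bijective.of_comp_iff' (bijective_dual_eval R N), LinearEquiv.coe_coe,
    Function.Bijective.of_comp_iff _ (evalEquiv R M).symm.bijective] at hff
  exact hff

theorem torsion_le_ker [IsTorsionFree R N] (f : M →ₗ[R] N) : torsion R M ≤ ker f := by
  rintro a ⟨r, hr⟩
  refine (isRegular_iff_mem_nonZeroDivisors.mpr r.2).isSMulRegular ?_
  simpa [Submonoid.smul_def] using congr(f $hr)

theorem _root_.Submodule.dualMap_torsion_mkQ_bijective :
    Function.Bijective (torsion R M).mkQ.dualMap :=
  ⟨dualMap_injective_of_surjective (mkQ_surjective _), fun φ ↦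
    ⟨(torsion R M).liftQ φ (torsion_le_ker φ), (torsion R M).liftQ_mkQ φ (torsion_le_ker φ)⟩⟩

variable [IsReflexive R N] {f : M →ₗ[R] N}

theorem bijective_liftQ_torsion_of_dualMap_bijective [IsReflexive R (M ⧸ torsion R M)]
    (hf : Function.Bijective f.dualMap) :
    Function.Bijective ((torsion R M).liftQ f (torsion_le_ker f)) := by
  refine bijective_of_dualMap_bijective ?_
  rw [← Function.Bijective.of_comp_iff' dualMap_torsion_mkQ_bijective, ← coe_comp,
    dualMap_comp_dualMap, liftQ_mkQ]
  exact hf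

theorem surjective_and_ker_eq_torsion_of_dualMap_bijective [IsReflexive R (M ⧸ torsion R M)]
    (hf : Function.Bijective f.dualMap) : Function.Surjective f ∧ ker f = torsion R M := by
  have hbij := bijective_liftQ_torsion_of_dualMap_bijective hf
  have hfac : f = (torsion R M).liftQ f (torsion_le_ker f) ∘ₗ (torsion R M).mkQ :=
    ((torsion R M).liftQ_mkQ f _).symm
  refine ⟨?_, ?_⟩
  · rw [hfac, coe_comp]
    exact hbij.surjective.comp (mkQ_surjective _)
  · rw [hfac, ker_comp, ker_eq_bot.mpr hbij.injective, comap_bot, ker_mkQ]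

end LinearMap

/-- Let `A` be a finitely generated abelian group, `B` a finitely generated
free abelian group, and `f : A →+ B` a homomorphism such that precomposition with `f` is a
bijection `Hom(B, ℤ) → Hom(A, ℤ)`.  Then `f` is surjective and its kernel is exactly the
torsion subgroup of `A`: for `a : A`, `f a = 0` iff `a` has finite (additive) order. -/
theorem surjective_and_ker_eq_torsion_of_intDual_bijective
    {A B : Type} [AddCommGroup A] [Module.Finite ℤ A]
    [AddCommGroup B] [Module.Finite ℤ B] [Module.Free ℤ B]
    (f : A →+ B)
    (hf : Function.Bijective fun φ : B →+ ℤ => φ.comp f) :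
    Function.Surjective f ∧ ∀ a : A, f a = 0 ↔ IsOfFinAddOrder a := by
  have hdual : Function.Bijective f.toIntLinearMap.dualMap :=
    (addMonoidHomLequivInt ℤ).bijective.comp (hf.comp (addMonoidHomLequivInt ℤ).symm.bijective)
  obtain ⟨hsurj, hker⟩ := LinearMap.surjective_and_ker_eq_torsion_of_dualMap_bijective hdual
  refine ⟨hsurj, fun a ↦ ?_⟩
  rw [← AddCommGroup.mem_torsion, ← torsion_int]
  exact SetLike.ext_iff.mp hker a
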